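/- arXiv:2006.00491 — 2 statements merged into one kernel-verified Lean document; each statement's English description precedes it below -/
import Mathlib

section
/- For the exchange operator X = ∑_σ ∫dxdy V(x−y) ω_σ(x−y)(a*_σ(u_x)a_σ(u_y) − a*_σ(v̄_y)a_σ(v̄_x)), one has the bound |⟨ψ, X ψ⟩| ≤ ρ ‖V‖₁ ⟨ψ, N ψ⟩ for all Fock vectors ψ, using ‖ω_σ‖_∞ ≤ ρ_σ and the identities ∫dx ‖a_σ(u_x)ψ‖² = ∑_{k∉B_F^σ} ‖â_{k,σ}ψ‖², ∫dx ‖a_σ(v̄_x)ψ‖² = ∑_{k∈B_F^σ} ‖â_{k,σ}ψ‖². -/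
open MeasureTheory
open scoped BigOperators

private abbrev E3 := EuclideanSpace ℝ (Fin 3)

private lemma aux_fubini (V f : E3 → ℝ)
    (hVInt : Integrable V) (hV0 : ∀ x, 0 ≤ V x)
    (hVtrans : ∀ x : E3, (∫ y, V (x - y)) = ∫ y, V y)
    (hf : Integrable f) (hf0 : ∀ x, 0 ≤ f x)
    (hI : Integrable (fun p : E3 × E3 => V (p.1 - p.2) * (f p.1 + f p.2))
      ((volume : Measure E3).prod volume)) :
    (∫ p : E3 × E3, V (p.1 - p.2) * (f p.1 + f p.2) ∂((volume : Measure E3).prod volume))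
      = (∫ x, V x) * ((∫ x, f x) + (∫ x, f x)) := by
  have hVm : AEStronglyMeasurable (fun p : E3 × E3 => V (p.1 - p.2))
      ((volume : Measure E3).prod volume) := by
    have h1 : AEStronglyMeasurable (fun q : E3 × E3 => V q.1)
        ((volume : Measure E3).prod volume) :=
      hVInt.1.comp_quasiMeasurePreserving MeasureTheory.Measure.quasiMeasurePreserving_fst
    exact h1.comp_measurePreserving (measurePreserving_sub_prod volume volume)
  have hfx : AEStronglyMeasurable (fun p : E3 × E3 => f p.1)
      ((volume : Measure E3).prod volume) :=
    hf.1.comp_quasiMeasurePreserving MeasureTheory.Measure.quasiMeasurePreserving_fst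
  have hfy : AEStronglyMeasurable (fun p : E3 × E3 => f p.2)
      ((volume : Measure E3).prod volume) :=
    hf.1.comp_quasiMeasurePreserving MeasureTheory.Measure.quasiMeasurePreserving_snd
  have I1 : Integrable (fun p : E3 × E3 => V (p.1 - p.2) * f p.1)
      ((volume : Measure E3).prod volume) := by
    refine hI.mono' (hVm.mul hfx) (Filter.Eventually.of_forall fun p => ?_)
    have := hV0 (p.1 - p.2); have := hf0 p.1; have := hf0 p.2
    rw [Real.norm_eq_abs, abs_of_nonneg (by positivity)]
    nlinarith
  have I2 : Integrable (fun p : E3 × E3 => V (p.1 - p.2) * f p.2)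
      ((volume : Measure E3).prod volume) := by
    refine hI.mono' (hVm.mul hfy) (Filter.Eventually.of_forall fun p => ?_)
    have := hV0 (p.1 - p.2); have := hf0 p.1; have := hf0 p.2
    rw [Real.norm_eq_abs, abs_of_nonneg (by positivity)]
    nlinarith
  have hsplit : (∫ p : E3 × E3, V (p.1 - p.2) * (f p.1 + f p.2)
        ∂((volume : Measure E3).prod volume))
      = (∫ p : E3 × E3, V (p.1 - p.2) * f p.1 ∂((volume : Measure E3).prod volume))
        + ∫ p : E3 × E3, V (p.1 - p.2) * f p.2 ∂((volume : Measure E3).prod volume) := by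
    rw [← integral_add I1 I2]
    congr 1; funext p; ring
  have hA1 : (∫ p : E3 × E3, V (p.1 - p.2) * f p.1 ∂((volume : Measure E3).prod volume))
      = (∫ x, V x) * ∫ x, f x := by
    rw [MeasureTheory.integral_prod _ I1]
    have : ∀ x : E3, (∫ y, V (x - y) * f x) = (∫ x, V x) * f x := by
      intro x
      rw [integral_mul_const, hVtrans x]
    simp_rw [this]
    rw [integral_const_mul]
  have hA2 : (∫ p : E3 × E3, V (p.1 - p.2) * f p.2 ∂((volume : Measure E3).prod volume))
      = (∫ x, V x) * ∫ x, f x := by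
    rw [MeasureTheory.integral_prod_symm _ I2]
    have : ∀ y : E3, (∫ x, V (x - y) * f y) = (∫ x, V x) * f y := by
      intro y
      rw [integral_mul_const, integral_sub_right_eq_self V y]
    simp_rw [this]
    rw [integral_const_mul]
  rw [hsplit, hA1, hA2]; ring

/-- Bound for the exchange operator
`X = ∑_σ ∫dxdy V(x−y) ω_σ(x−y)(a*_σ(u_x)a_σ(u_y) − a*_σ(v̄_y)a_σ(v̄_x))`:
`|⟨ψ, X ψ⟩| ≤ ρ ‖V‖₁ ⟨ψ, N ψ⟩`, using `‖ω_σ‖_∞ ≤ ρ_σ ≤ ρ` and the identities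
`∑_σ (∫dx ‖a_σ(u_x)ψ‖² + ∫dx ‖a_σ(v̄_x)ψ‖²) = ⟨ψ, N ψ⟩`. -/
theorem stmt_10 {F : Type*} [NormedAddCommGroup F] [InnerProductSpace ℂ F]
    (ρ : ℝ) (ρσ : Bool → ℝ) (hρσ0 : ∀ σ, 0 ≤ ρσ σ)
    (hρ : ρ = ρσ true + ρσ false)
    (V : EuclideanSpace ℝ (Fin 3) → ℝ) (hV : ∀ x, 0 ≤ V x)
    (hVInt : Integrable V)
    (hVtrans : ∀ x : EuclideanSpace ℝ (Fin 3), (∫ y, V (x - y)) = ∫ y, V y)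
    (ω : Bool → EuclideanSpace ℝ (Fin 3) → ℂ)
    (hω : ∀ σ x, ‖ω σ x‖ ≤ ρσ σ)
    (Au Av : Bool → EuclideanSpace ℝ (Fin 3) → F →L[ℂ] F)
    (N : F →L[ℂ] F)
    (hN : ∀ ψ : F, (inner ℂ ψ (N ψ) : ℂ).re =
      ∑ σ : Bool, ((∫ x, ‖(Au σ x) ψ‖ ^ 2) + ∫ x, ‖(Av σ x) ψ‖ ^ 2))
    (Xop : F →L[ℂ] F)
    (hX : ∀ ψ : F, (inner ℂ ψ (Xop ψ) : ℂ) =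
      ∑ σ : Bool, ∫ x, ∫ y,
        (((V (x - y) : ℝ) : ℂ) * ω σ (x - y)) *
          ((inner ℂ ((Au σ x) ψ) ((Au σ y) ψ) : ℂ)
            - (inner ℂ ((Av σ y) ψ) ((Av σ x) ψ) : ℂ)))
    (hIu : ∀ (ψ : F) (σ : Bool), Integrable (fun x => ‖(Au σ x) ψ‖ ^ 2))
    (hIv : ∀ (ψ : F) (σ : Bool), Integrable (fun x => ‖(Av σ x) ψ‖ ^ 2))
    (hIprod : ∀ (ψ : F) (σ : Bool),
      Integrable (fun p : EuclideanSpace ℝ (Fin 3) × EuclideanSpace ℝ (Fin 3) =>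
        V (p.1 - p.2) * (‖(Au σ p.1) ψ‖ ^ 2 + ‖(Au σ p.2) ψ‖ ^ 2
          + ‖(Av σ p.1) ψ‖ ^ 2 + ‖(Av σ p.2) ψ‖ ^ 2))) :
    ∀ ψ : F, ‖(inner ℂ ψ (Xop ψ) : ℂ)‖ ≤ ρ * (∫ x, V x) * (inner ℂ ψ (N ψ) : ℂ).re := by
  intro ψ
  set f : Bool → E3 → ℝ := fun σ x => ‖(Au σ x) ψ‖ ^ 2 + ‖(Av σ x) ψ‖ ^ 2 with hf_def
  have hf0 : ∀ σ x, 0 ≤ f σ x := fun σ x => by positivity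
  have hfInt : ∀ σ, Integrable (f σ) := fun σ => (hIu ψ σ).add (hIv ψ σ)
  -- the dominating function on the product space
  set h : Bool → E3 × E3 → ℝ :=
    fun σ p => V (p.1 - p.2) * (f σ p.1 + f σ p.2) with hh_def
  have hIh : ∀ σ, Integrable (h σ) ((volume : Measure E3).prod volume) := by
    intro σ
    have := hIprod ψ σ
    rw [← MeasureTheory.Measure.volume_eq_prod]
    convert this using 2 with p
    simp only [hh_def, hf_def]
    ring
  -- pointwise bound on the complex integrand
  have hptwise : ∀ σ (x y : E3),
      ‖(((V (x - y) : ℝ) : ℂ) * ω σ (x - y)) *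
          ((inner ℂ ((Au σ x) ψ) ((Au σ y) ψ) : ℂ)
            - (inner ℂ ((Av σ y) ψ) ((Av σ x) ψ) : ℂ))‖
        ≤ ρσ σ / 2 * h σ (x, y) := by
    intro σ x y
    have hVxy := hV (x - y)
    have hωb := hω σ (x - y)
    have hρb := hρσ0 σ
    have hinner : ‖(inner ℂ ((Au σ x) ψ) ((Au σ y) ψ) : ℂ)
        - (inner ℂ ((Av σ y) ψ) ((Av σ x) ψ) : ℂ)‖
        ≤ (f σ (x, y).1 + f σ (x, y).2) / 2 := by
      have b1 : ‖(inner ℂ ((Au σ x) ψ) ((Au σ y) ψ) : ℂ)‖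
          ≤ ‖(Au σ x) ψ‖ * ‖(Au σ y) ψ‖ := norm_inner_le_norm _ _
      have b2 : ‖(inner ℂ ((Av σ y) ψ) ((Av σ x) ψ) : ℂ)‖
          ≤ ‖(Av σ y) ψ‖ * ‖(Av σ x) ψ‖ := norm_inner_le_norm _ _
      have tri := norm_sub_le (inner ℂ ((Au σ x) ψ) ((Au σ y) ψ) : ℂ)
        (inner ℂ ((Av σ y) ψ) ((Av σ x) ψ) : ℂ)
      simp only [hf_def]
      nlinarith [sq_nonneg (‖(Au σ x) ψ‖ - ‖(Au σ y) ψ‖),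
        sq_nonneg (‖(Av σ x) ψ‖ - ‖(Av σ y) ψ‖)]
    calc ‖(((V (x - y) : ℝ) : ℂ) * ω σ (x - y)) *
          ((inner ℂ ((Au σ x) ψ) ((Au σ y) ψ) : ℂ)
            - (inner ℂ ((Av σ y) ψ) ((Av σ x) ψ) : ℂ))‖
        = ‖((V (x - y) : ℝ) : ℂ)‖ * ‖ω σ (x - y)‖ *
            ‖(inner ℂ ((Au σ x) ψ) ((Au σ y) ψ) : ℂ)
              - (inner ℂ ((Av σ y) ψ) ((Av σ x) ψ) : ℂ)‖ := by
          rw [norm_mul, norm_mul]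
      _ ≤ V (x - y) * ρσ σ * ((f σ (x, y).1 + f σ (x, y).2) / 2) := by
          have h1 : ‖((V (x - y) : ℝ) : ℂ)‖ = V (x - y) := by
            rw [Complex.norm_real, Real.norm_eq_abs, abs_of_nonneg hVxy]
          rw [h1]
          have hn0 : (0:ℝ) ≤ ‖(inner ℂ ((Au σ x) ψ) ((Au σ y) ψ) : ℂ)
              - (inner ℂ ((Av σ y) ψ) ((Av σ x) ψ) : ℂ)‖ := norm_nonneg _
          exact mul_le_mul (mul_le_mul_of_nonneg_left hωb hVxy) hinner hn0
            (mul_nonneg hVxy hρb)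
      _ = ρσ σ / 2 * h σ (x, y) := by simp only [hh_def]; ring
  -- per-spin bound on the double integral
  have hσbound : ∀ σ : Bool,
      ‖∫ x, ∫ y, (((V (x - y) : ℝ) : ℂ) * ω σ (x - y)) *
          ((inner ℂ ((Au σ x) ψ) ((Au σ y) ψ) : ℂ)
            - (inner ℂ ((Av σ y) ψ) ((Av σ x) ψ) : ℂ))‖
        ≤ ρσ σ / 2 * ∫ p, h σ p ∂((volume : Measure E3).prod volume) := by
    intro σ
    have hc0 : (0:ℝ) ≤ ρσ σ / 2 := by have := hρσ0 σ; linarith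
    have hch : Integrable (fun p : E3 × E3 => ρσ σ / 2 * h σ p)
        ((volume : Measure E3).prod volume) := (hIh σ).const_mul _
    have hmid : (∫ x, ∫ y, ρσ σ / 2 * h σ (x, y))
        = ρσ σ / 2 * ∫ p, h σ p ∂((volume : Measure E3).prod volume) := by
      rw [MeasureTheory.integral_integral hch, integral_const_mul]
    calc ‖∫ x, ∫ y, (((V (x - y) : ℝ) : ℂ) * ω σ (x - y)) *
          ((inner ℂ ((Au σ x) ψ) ((Au σ y) ψ) : ℂ)
            - (inner ℂ ((Av σ y) ψ) ((Av σ x) ψ) : ℂ))‖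
        ≤ ∫ x, ‖∫ y, (((V (x - y) : ℝ) : ℂ) * ω σ (x - y)) *
            ((inner ℂ ((Au σ x) ψ) ((Au σ y) ψ) : ℂ)
              - (inner ℂ ((Av σ y) ψ) ((Av σ x) ψ) : ℂ))‖ :=
          norm_integral_le_integral_norm _
      _ ≤ ∫ x, ∫ y, ρσ σ / 2 * h σ (x, y) := by
          refine integral_mono_of_nonneg
            (Filter.Eventually.of_forall fun x => norm_nonneg _)
            hch.integral_prod_left ?_
          filter_upwards [(hIh σ).prod_right_ae] with x hx
          calc ‖∫ y, (((V (x - y) : ℝ) : ℂ) * ω σ (x - y)) *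
              ((inner ℂ ((Au σ x) ψ) ((Au σ y) ψ) : ℂ)
                - (inner ℂ ((Av σ y) ψ) ((Av σ x) ψ) : ℂ))‖
              ≤ ∫ y, ‖(((V (x - y) : ℝ) : ℂ) * ω σ (x - y)) *
                ((inner ℂ ((Au σ x) ψ) ((Au σ y) ψ) : ℂ)
                  - (inner ℂ ((Av σ y) ψ) ((Av σ x) ψ) : ℂ))‖ :=
                norm_integral_le_integral_norm _
            _ ≤ ∫ y, ρσ σ / 2 * h σ (x, y) := by
                refine integral_mono_of_nonneg
                  (Filter.Eventually.of_forall fun y => norm_nonneg _)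
                  (hx.const_mul _)
                  (Filter.Eventually.of_forall fun y => hptwise σ x y)
      _ = ρσ σ / 2 * ∫ p, h σ p ∂((volume : Measure E3).prod volume) := hmid
  -- evaluate the product integral
  have hval : ∀ σ : Bool,
      (∫ p, h σ p ∂((volume : Measure E3).prod volume))
        = (∫ x, V x) * ((∫ x, f σ x) + ∫ x, f σ x) :=
    fun σ => aux_fubini V (f σ) hVInt hV hVtrans (hfInt σ) (hf0 σ) (hIh σ)
  -- put everything together
  have hS0 : ∀ σ, 0 ≤ ∫ x, f σ x := fun σ => integral_nonneg (hf0 σ)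
  have hV0' : 0 ≤ ∫ x, V x := integral_nonneg hV
  have hsum : ∀ σ, (∫ x, ‖(Au σ x) ψ‖ ^ 2) + (∫ x, ‖(Av σ x) ψ‖ ^ 2) = ∫ x, f σ x :=
    fun σ => (integral_add (hIu ψ σ) (hIv ψ σ)).symm
  rw [hX ψ]
  calc ‖∑ σ : Bool, ∫ x, ∫ y, (((V (x - y) : ℝ) : ℂ) * ω σ (x - y)) *
          ((inner ℂ ((Au σ x) ψ) ((Au σ y) ψ) : ℂ)
            - (inner ℂ ((Av σ y) ψ) ((Av σ x) ψ) : ℂ))‖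
      ≤ ∑ σ : Bool, ‖∫ x, ∫ y, (((V (x - y) : ℝ) : ℂ) * ω σ (x - y)) *
          ((inner ℂ ((Au σ x) ψ) ((Au σ y) ψ) : ℂ)
            - (inner ℂ ((Av σ y) ψ) ((Av σ x) ψ) : ℂ))‖ := norm_sum_le _ _
    _ ≤ ∑ σ : Bool, ρσ σ / 2 * ∫ p, h σ p ∂((volume : Measure E3).prod volume) :=
        Finset.sum_le_sum fun σ _ => hσbound σ
    _ = ∑ σ : Bool, ρσ σ * (∫ x, V x) * ∫ x, f σ x := by
        refine Finset.sum_congr rfl fun σ _ => ?_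
        rw [hval σ]; ring
    _ ≤ ρ * (∫ x, V x) * (inner ℂ ψ (N ψ) : ℂ).re := by
        rw [hN ψ]
        simp only [Fintype.sum_bool, hsum]
        have h0t := hρσ0 true; have h0f := hρσ0 false
        have hSt := hS0 true; have hSf := hS0 false
        subst hρ
        nlinarith [mul_nonneg (mul_nonneg h0t hV0') hSf,
          mul_nonneg (mul_nonneg h0f hV0') hSt]
end

section
/- If V̂ is nonnegative (V of positive type) or more simply if V̂(0) = ∫V > 8πa, then taking the free Fermi gas as trial state gives the Hartree-Fock upper bound: E_L(N_↑,N_↓)/L³ ≤ (3/5)(6π²)^{2/3}(ρ_↑^{5/3} + ρ_↓^{5/3}) + V̂(0) ρ_↑ ρ_↓ + O(ρ^{7/3}), where the exchange term cancels the same-spin direct term up to O(ρ^{7/3}) because |V̂(k−k') − V̂(0)| ≤ Cρ^{1/3} for k, k' in the Fermi ball. -/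
open scoped BigOperators
open MeasureTheory Metric Real

noncomputable section HFaux

local notation "E3" => EuclideanSpace ℝ (Fin 3)


def cube (δ : ℝ) (k : E3) : Set E3 := {p | ∀ i, p i ∈ Set.Ico (k i - δ/2) (k i + δ/2)}

lemma cube_eq (δ : ℝ) (k : E3) : cube δ k =
    (MeasurableEquiv.toLp 2 (Fin 3 → ℝ)).symm ⁻¹' (Set.univ.pi fun i => Set.Ico (k i - δ/2) (k i + δ/2)) := by
  ext p
  simp [cube, Set.mem_pi]

lemma measurableSet_cube (δ : ℝ) (k : E3) : MeasurableSet (cube δ k) := by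
  rw [cube_eq]
  exact (MeasurableEquiv.toLp 2 (Fin 3 → ℝ)).symm.measurable (MeasurableSet.univ_pi fun i => measurableSet_Ico)

lemma volume_cube (δ : ℝ) (hδ : 0 ≤ δ) (k : E3) : volume (cube δ k) = ENNReal.ofReal (δ^3) := by
  rw [cube_eq, (EuclideanSpace.volume_preserving_symm_measurableEquiv_toLp (Fin 3)).measure_preimage
    ((MeasurableSet.univ_pi fun i => measurableSet_Ico).nullMeasurableSet),
    volume_pi_pi]
  simp only [Real.volume_Ico]
  have h : ∀ x : Fin 3, k x + δ/2 - (k x - δ/2) = δ := fun x => by ring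
  simp_rw [h]
  rw [Finset.prod_const, Finset.card_univ, Fintype.card_fin, ← ENNReal.ofReal_pow hδ]

lemma vol_ball_E3 (r : ℝ) (hr : 0 ≤ r) : volume (ball (0:E3) r) = ENNReal.ofReal (4 * π * r^3 / 3) := by
  rw [EuclideanSpace.volume_ball]
  simp only [Fintype.card_fin]
  have h1 : Real.Gamma ((3:ℕ) / 2 + 1) = 3/4 * Real.sqrt π := by
    rw [show ((3:ℕ):ℝ)/2 + 1 = (3/2 : ℝ) + 1 by norm_num, Real.Gamma_add_one (by norm_num),
      show (3/2 : ℝ) = (1/2:ℝ) + 1 by norm_num, Real.Gamma_add_one (by norm_num), Real.Gamma_one_half_eq]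
    ring
  have h2 : Real.sqrt π ^ (3:ℕ) = π * Real.sqrt π := by
    rw [pow_succ, Real.sq_sqrt pi_nonneg]
  have h3 : π * Real.sqrt π / (3/4 * Real.sqrt π) = 4 * π / 3 := by
    rw [mul_div_mul_comm, div_self (by positivity : Real.sqrt π ≠ 0)]
    ring
  rw [h1, h2, h3, ← ENNReal.ofReal_pow hr, ← ENNReal.ofReal_mul (by positivity)]
  congr 1
  ring

lemma vol_ball_one : (volume (ball (0:E3) 1)).toReal = 4 * π / 3 := by
  rw [EuclideanSpace.volume_ball]
  simp only [Fintype.card_fin]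
  have h1 : Real.Gamma ((3:ℕ) / 2 + 1) = 3/4 * Real.sqrt π := by
    rw [show ((3:ℕ):ℝ)/2 + 1 = (3/2 : ℝ) + 1 by norm_num, Real.Gamma_add_one (by norm_num),
      show (3/2 : ℝ) = (1/2:ℝ) + 1 by norm_num, Real.Gamma_add_one (by norm_num), Real.Gamma_one_half_eq]
    ring
  have h2 : Real.sqrt π ^ (3:ℕ) = π * Real.sqrt π := by
    rw [pow_succ, Real.sq_sqrt pi_nonneg]
  have h3 : π * Real.sqrt π / (3/4 * Real.sqrt π) = 4 * π / 3 := by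
    rw [mul_div_mul_comm, div_self (by positivity : Real.sqrt π ≠ 0)]
    ring
  rw [h1, h2, h3, ENNReal.ofReal_one, one_pow, one_mul, ENNReal.toReal_ofReal (by positivity)]

lemma norm_le_of_coords (x : E3) (b : ℝ) (hb : 0 ≤ b) (h : ∀ i, |x i| ≤ b) :
    ‖x‖ ≤ Real.sqrt 3 * b := by
  rw [EuclideanSpace.norm_eq]
  have h1 : ∑ i, ‖x i‖^2 ≤ 3 * b^2 := by
    rw [Fin.sum_univ_three]
    have := fun i => sq_le_sq' (neg_le_of_abs_le (h i)) (le_of_abs_le (h i))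
    simp only [Real.norm_eq_abs, sq_abs]
    nlinarith [this 0, this 1, this 2]
  calc Real.sqrt (∑ i, ‖x i‖^2) ≤ Real.sqrt (3 * b^2) := Real.sqrt_le_sqrt h1
    _ = Real.sqrt 3 * b := by
        rw [Real.sqrt_mul (by norm_num), Real.sqrt_sq hb]

lemma cube_subset_closedBall {δ : ℝ} (k : E3) :
    cube δ k ⊆ closedBall k (Real.sqrt 3 * (δ/2)) := by
  intro p hp
  rw [mem_closedBall, dist_eq_norm]
  refine norm_le_of_coords _ _ ?_ fun i => ?_
  · rcases (hp 0) with ⟨h1, h2⟩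
    simp only [] at h1 h2
    linarith
  · have := hp i
    simp only [Set.mem_Ico] at this
    rw [PiLp.sub_apply, abs_le]
    constructor <;> [linarith [this.1]; linarith [this.2.le]]

lemma cube_disjoint {L : ℝ} (hL : 0 < L) {k k' : E3}
    (hk : ∀ i, ∃ n : ℤ, k i = 2 * π * n / L) (hk' : ∀ i, ∃ n : ℤ, k' i = 2 * π * n / L)
    (hne : k ≠ k') : Disjoint (cube (2*π/L) k) (cube (2*π/L) k') := by
  have hex : ∃ i, k i ≠ k' i := by
    by_contra h
    push_neg at h
    exact hne (by ext i; exact h i)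
  obtain ⟨i, hi⟩ := hex
  obtain ⟨n, hn⟩ := hk i
  obtain ⟨n', hn'⟩ := hk' i
  have hnn : n ≠ n' := by
    rintro rfl
    exact hi (hn.trans hn'.symm)
  have hsep : 2*π/L ≤ |k i - k' i| := by
    rw [hn, hn']
    have e : 2*π*n/L - 2*π*n'/L = 2*π*((n:ℝ)-n')/L := by ring
    rw [e, abs_div, abs_of_pos hL, abs_mul, abs_of_pos (by positivity : (0:ℝ) < 2*π)]
    have h1 : (1:ℝ) ≤ |(n:ℝ) - n'| := by
      rw [← Int.cast_sub, ← Int.cast_abs]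
      exact_mod_cast Int.one_le_abs (sub_ne_zero.mpr hnn)
    calc 2*π/L = 2*π*1/L := by ring
      _ ≤ 2*π*|(n:ℝ)-n'|/L := by gcongr
  rw [Set.disjoint_left]
  intro p hp hp'
  have h1 := hp i
  have h2 := hp' i
  simp only [Set.mem_Ico] at h1 h2
  rcases abs_cases (k i - k' i) with ⟨h3, _⟩ | ⟨h3, _⟩ <;> rw [h3] at hsep <;> linarith [h1.1, h1.2, h2.1, h2.2]

lemma covering {L kF : ℝ} (hL : 0 < L) {B : Finset E3}
    (hB : ∀ k : E3, k ∈ B ↔ ((∀ i : Fin 3, ∃ n : ℤ, k i = 2 * π * n / L) ∧ ‖k‖ ≤ kF)) :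
    ball (0:E3) (kF - Real.sqrt 3 * π / L) ⊆ ⋃ k ∈ B, cube (2*π/L) k := by
  intro x hx
  rw [mem_ball, dist_zero_right] at hx
  have hL2 : (0:ℝ) < 2*π/L := by positivity
  set k0 : E3 := (EuclideanSpace.equiv (Fin 3) ℝ).symm (fun i => 2*π*(round (x i * L / (2*π))) / L) with hk0
  have hk0i : ∀ i, k0 i = 2*π*(round (x i * L / (2*π))) / L := fun i => rfl
  have hcoord : ∀ i, -(2*π/L/2) ≤ x i - k0 i ∧ x i - k0 i < 2*π/L/2 := by
    intro i
    obtain ⟨r, hr⟩ : ∃ r : ℤ, r = round (x i * L / (2*π)) := ⟨_, rfl⟩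
    have hk0i' : k0 i = 2*π*(r:ℝ)/L := by rw [hk0i i, hr]
    have h1 : (r:ℝ) ≤ x i * L / (2*π) + 1/2 := by
      rw [hr, round_eq]; exact (Int.floor_le _).trans (by norm_num)
    have h2 : x i * L / (2*π) + 1/2 < (r:ℝ) + 1 := by
      rw [hr, round_eq]; push_cast; exact Int.lt_floor_add_one _
    have e : x i * L / (2*π) * (2*π/L) = x i := by field_simp
    have b1 := mul_le_mul_of_nonneg_right h1 hL2.le
    have b2 := mul_lt_mul_of_pos_right h2 hL2
    rw [add_mul, e] at b1
    rw [add_mul, e] at b2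
    rw [hk0i']
    ring_nf at b1 b2 ⊢
    constructor <;> linarith
  have hdist : ‖k0 - x‖ ≤ Real.sqrt 3 * π / L := by
    have h := norm_le_of_coords (k0 - x) (2*π/L/2) (by positivity) fun i => by
      rw [PiLp.sub_apply]
      have := hcoord i
      rw [abs_le]
      constructor <;> [linarith [this.2.le]; linarith [this.1]]
    calc ‖k0 - x‖ ≤ Real.sqrt 3 * (2*π/L/2) := h
      _ = Real.sqrt 3 * π / L := by ring
  have hmem : k0 ∈ B := by
    rw [hB]
    refine ⟨fun i => ⟨round (x i * L / (2*π)), hk0i i⟩, ?_⟩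
    calc ‖k0‖ ≤ ‖k0 - x‖ + ‖x‖ := by
          simpa using norm_add_le (k0 - x) x
      _ ≤ Real.sqrt 3 * π / L + (kF - Real.sqrt 3 * π / L) := add_le_add hdist hx.le
      _ = kF := by ring
  refine Set.mem_biUnion hmem fun i => ?_
  have := hcoord i
  simp only [Set.mem_Ico]
  constructor <;> [linarith [this.1]; linarith [this.2]]

lemma integral_radial (R c : ℝ) (hR : 0 ≤ R) :
    ∫ p in closedBall (0:E3) R, (‖p‖ + c)^2 =
      4 * π * (R^5/5 + c * R^4/2 + c^2 * R^3/3) := by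
  have key := MeasureTheory.integral_fun_norm_addHaar (volume : Measure E3)
    (fun y => Set.indicator (Set.Icc 0 R) (fun y => (y + c)^2) y)
  have hfr : Module.finrank ℝ E3 = 3 := by
    simp [finrank_euclideanSpace]
  rw [hfr] at key
  have lhs_eq : (∫ x : E3, Set.indicator (Set.Icc 0 R) (fun y => (y + c)^2) ‖x‖) =
      ∫ p in closedBall (0:E3) R, (‖p‖ + c)^2 := by
    rw [← integral_indicator (measurableSet_closedBall)]
    congr 1
    funext x
    by_cases hx : ‖x‖ ≤ R
    · rw [Set.indicator_of_mem (by simp [Set.mem_Icc, norm_nonneg, hx]),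
        Set.indicator_of_mem (by simp [mem_closedBall, dist_zero_right, hx])]
    · rw [Set.indicator_of_notMem (by simp [Set.mem_Icc, hx]),
        Set.indicator_of_notMem (by simp [mem_closedBall, dist_zero_right, hx])]
  have inner_eq : (∫ y in Set.Ioi (0:ℝ), y ^ (3-1) • Set.indicator (Set.Icc 0 R) (fun y => (y + c)^2) y)
      = R^5/5 + c * R^4/2 + c^2 * R^3/3 := by
    have step1 : ∀ y : ℝ, y ^ (3-1) • Set.indicator (Set.Icc 0 R) (fun y => (y + c)^2) y =
        Set.indicator (Set.Icc 0 R) (fun y => y^2 * (y + c)^2) y := by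
      intro y
      by_cases hy : y ∈ Set.Icc 0 R
      · rw [Set.indicator_of_mem hy, Set.indicator_of_mem hy, smul_eq_mul]
      · rw [Set.indicator_of_notMem hy, Set.indicator_of_notMem hy, smul_zero]
    simp_rw [step1]
    rw [setIntegral_indicator measurableSet_Icc]
    have hset : Set.Ioi (0:ℝ) ∩ Set.Icc 0 R = Set.Ioc 0 R := by
      ext y
      simp only [Set.mem_inter_iff, Set.mem_Ioi, Set.mem_Icc, Set.mem_Ioc]
      constructor
      · rintro ⟨h1, _, h3⟩; exact ⟨h1, h3⟩
      · rintro ⟨h1, h2⟩; exact ⟨h1, h1.le, h2⟩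
    rw [hset, ← intervalIntegral.integral_of_le hR]
    have expand : ∀ y : ℝ, y^2 * (y + c)^2 = y^4 + 2*c*y^3 + c^2*y^2 := fun y => by ring
    simp_rw [expand]
    have i1 : IntervalIntegrable (fun y : ℝ => y^4) volume 0 R := (continuous_pow 4).intervalIntegrable 0 R
    have i2 : IntervalIntegrable (fun y : ℝ => 2*c*y^3) volume 0 R :=
      (continuous_const.mul (continuous_pow 3)).intervalIntegrable 0 R
    have i3 : IntervalIntegrable (fun y : ℝ => c^2*y^2) volume 0 R :=
      (continuous_const.mul (continuous_pow 2)).intervalIntegrable 0 R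
    rw [intervalIntegral.integral_add (i1.add i2) i3, intervalIntegral.integral_add i1 i2,
      intervalIntegral.integral_const_mul, intervalIntegral.integral_const_mul]
    simp only [integral_pow]
    norm_num
    ring
  rw [lhs_eq, inner_eq, measureReal_def, vol_ball_one] at key
  rw [key]
  simp only [smul_eq_mul, nsmul_eq_mul]
  push_cast
  ring

lemma cover_count {L kF : ℝ} (hL : 0 < L) {B : Finset E3}
    (hB : ∀ k : E3, k ∈ B ↔ ((∀ i : Fin 3, ∃ n : ℤ, k i = 2 * π * n / L) ∧ ‖k‖ ≤ kF)) :
    4 * π * (kF - Real.sqrt 3 * π / L)^3 / 3 ≤ (B.card : ℝ) * (2*π/L)^3 := by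
  rcases le_or_gt (kF - Real.sqrt 3 * π / L) 0 with h | h
  · have h1 : (kF - Real.sqrt 3 * π / L)^3 ≤ 0 := Odd.pow_nonpos ⟨1, by norm_num⟩ h
    have h2 : (0:ℝ) ≤ (B.card : ℝ) * (2*π/L)^3 := by positivity
    nlinarith [mul_nonneg pi_pos.le (neg_nonneg.mpr h1)]
  · have h1 : volume (ball (0:E3) (kF - Real.sqrt 3 * π / L)) ≤
        ∑ k ∈ B, volume (cube (2*π/L) k) :=
      (measure_mono (covering hL hB)).trans (measure_biUnion_finset_le B _)
    rw [vol_ball_E3 _ h.le] at h1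
    have h2 : ∑ k ∈ B, volume (cube (2*π/L) k) = ENNReal.ofReal ((B.card : ℝ) * (2*π/L)^3) := by
      rw [Finset.sum_congr rfl fun k _ => volume_cube (2*π/L) (by positivity) k,
        Finset.sum_const, nsmul_eq_mul, ← ENNReal.ofReal_natCast,
        ← ENNReal.ofReal_mul (Nat.cast_nonneg _)]
    rw [h2] at h1
    exact (ENNReal.ofReal_le_ofReal_iff (by positivity)).mp h1

lemma sum_sq_bound {L kF : ℝ} (hL : 0 < L) (hkF : 0 ≤ kF) {B : Finset E3}
    (hB : ∀ k : E3, k ∈ B ↔ ((∀ i : Fin 3, ∃ n : ℤ, k i = 2 * π * n / L) ∧ ‖k‖ ≤ kF)) :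
    (∑ k ∈ B, ‖k‖^2) * (2*π/L)^3 ≤
      4 * π * ((kF + Real.sqrt 3 * π / L)^5/5 + (Real.sqrt 3 * π / L) * (kF + Real.sqrt 3 * π / L)^4/2
        + (Real.sqrt 3 * π / L)^2 * (kF + Real.sqrt 3 * π / L)^3/3) := by
  set δ := 2*π/L with hδdef
  set c := Real.sqrt 3 * π / L with hcdef
  have hδ : (0:ℝ) < δ := by rw [hδdef]; positivity
  have hc : (0:ℝ) < c := by rw [hcdef]; positivity
  set R := kF + c with hRdef
  have hR : 0 ≤ R := by rw [hRdef]; linarith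
  have hceq : Real.sqrt 3 * (δ/2) = c := by rw [hδdef, hcdef]; ring
  have hg : IntegrableOn (fun p : E3 => (‖p‖ + c)^2) (closedBall 0 R) volume :=
    ((continuous_norm.add continuous_const).pow 2).continuousOn.integrableOn_compact (isCompact_closedBall 0 R)
  have hsub : ∀ k ∈ B, cube δ k ⊆ closedBall (0:E3) R := by
    intro k hk
    refine (cube_subset_closedBall k).trans ?_
    rw [hceq]
    refine closedBall_subset_closedBall' ?_
    have : dist k 0 = ‖k‖ := by simp
    rw [this, hRdef]
    have := ((hB k).mp hk).2
    linarith
  have step1 : ∀ k ∈ B, ‖k‖^2 * δ^3 ≤ ∫ p in cube δ k, (‖p‖ + c)^2 := by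
    intro k hk
    have hvol : volume (cube δ k) = ENNReal.ofReal (δ^3) := volume_cube δ hδ.le k
    have hconst : ∫ _ in cube δ k, ‖k‖^2 ∂volume = ‖k‖^2 * δ^3 := by
      rw [setIntegral_const, measureReal_def, hvol, ENNReal.toReal_ofReal (by positivity), smul_eq_mul]
      ring
    rw [← hconst]
    refine setIntegral_mono_on ?_ (hg.mono_set (hsub k hk)) (measurableSet_cube δ k) ?_
    · exact integrableOn_const (by rw [hvol]; exact ENNReal.ofReal_ne_top)
    · intro p hp
      have hdk : dist p k ≤ c := by
        have := cube_subset_closedBall k hp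
        rw [mem_closedBall, hceq] at this
        exact this
      have h1 : ‖k‖ ≤ ‖p‖ + c := by
        calc ‖k‖ ≤ ‖p‖ + ‖k - p‖ := by
              have := norm_add_le p (k - p)
              simpa using this
          _ ≤ ‖p‖ + c := by
              have h2 : ‖k - p‖ ≤ c := by
                rw [norm_sub_rev, ← dist_eq_norm]
                exact hdk
              linarith
      exact pow_le_pow_left₀ (norm_nonneg k) h1 2
  have step2 : ∑ k ∈ B, ∫ p in cube δ k, (‖p‖ + c)^2 ≤ ∫ p in closedBall (0:E3) R, (‖p‖ + c)^2 := by
    rw [← integral_biUnion_finset B (fun k _ => measurableSet_cube δ k)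
      (fun ⦃k⦄ hk ⦃k'⦄ hk' hne => cube_disjoint hL ((hB k).mp hk).1 ((hB k').mp hk').1 hne)
      (fun k hk => hg.mono_set (hsub k hk))]
    refine setIntegral_mono_set hg ?_ ?_
    · filter_upwards with p
      positivity
    · exact (Set.iUnion₂_subset hsub).eventuallyLE
  calc (∑ k ∈ B, ‖k‖^2) * δ^3 = ∑ k ∈ B, ‖k‖^2 * δ^3 := by rw [Finset.sum_mul]
    _ ≤ ∑ k ∈ B, ∫ p in cube δ k, (‖p‖ + c)^2 := Finset.sum_le_sum step1
    _ ≤ ∫ p in closedBall (0:E3) R, (‖p‖ + c)^2 := step2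
    _ = 4 * π * (R^5/5 + c * R^4/2 + c^2 * R^3/3) := integral_radial R c hR

lemma cube_root_mono {a b : ℝ} (hb : 0 ≤ b) (h : a^3 ≤ b^3) : a ≤ b := by
  by_contra h'
  push_neg at h'
  have := pow_lt_pow_left₀ h' hb (n := 3) (by norm_num)
  linarith

set_option maxHeartbeats 1000000 in
lemma spin_bound {L kF ρ : ℝ} {B : Finset E3} (hL : 0 < L) (hρ : 0 < ρ) (hρ1 : ρ ≤ 1)
    (hB : ∀ k : E3, k ∈ B ↔ ((∀ i : Fin 3, ∃ n : ℤ, k i = 2 * π * n / L) ∧ ‖k‖ ≤ kF))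
    (hcard : (B.card : ℝ) = ρ * L^3) (hsmall : Real.sqrt 3 * π / L ≤ ρ/100) :
    0 ≤ kF ∧ kF ≤ 8 * ρ^((1:ℝ)/3) ∧
    (∑ k ∈ B, ‖k‖^2) ≤ L^3 * ((3/5)*(6*π^2)^((2:ℝ)/3) * ρ^((5:ℝ)/3) + 100000 * ρ^((7:ℝ)/3)) := by
  have hπ3 : (3:ℝ) < π := pi_gt_three
  have hπ4 : π < 3.15 := pi_lt_d2
  have hπ9 : (9:ℝ) ≤ π^2 := by nlinarith
  have hπ27 : (27:ℝ) ≤ π^3 := by nlinarith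
  have hA1 : (1:ℝ) ≤ 6*π^2 := by nlinarith
  have hB60 : 6*π^2 ≤ 60 := by nlinarith
  obtain ⟨c, hcdef⟩ : ∃ x : ℝ, x = Real.sqrt 3 * π / L := ⟨_, rfl⟩
  rw [← hcdef] at hsmall
  have hc0 : 0 < c := by rw [hcdef]; positivity
  -- kF nonneg
  have hNpos : 0 < B.card := by
    rw [← Nat.cast_pos (α := ℝ), hcard]
    positivity
  obtain ⟨k0, hk0⟩ := Finset.card_pos.mp hNpos
  have hkF0 : 0 ≤ kF := le_trans (norm_nonneg k0) ((hB k0).mp hk0).2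
  -- m and its properties
  obtain ⟨m, hmdef⟩ : ∃ x : ℝ, x = (6*π^2*ρ)^((1:ℝ)/3) := ⟨_, rfl⟩
  have hm0 : 0 < m := hmdef ▸ Real.rpow_pos_of_pos (by positivity) _
  have hm3 : m^3 = 6*π^2*ρ := by
    rw [hmdef, ← Real.rpow_natCast ((6*π^2*ρ)^((1:ℝ)/3)) 3, ← Real.rpow_mul (by positivity)]
    norm_num
  have hρ13 : ρ ≤ ρ^((1:ℝ)/3) := by
    nth_rewrite 1 [← Real.rpow_one ρ]
    exact Real.rpow_le_rpow_of_exponent_ge hρ hρ1 (by norm_num)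
  have hρ131 : ρ^((1:ℝ)/3) ≤ 1 := Real.rpow_le_one hρ.le hρ1 (by positivity)
  have hr13m : ρ^((1:ℝ)/3) ≤ m := by
    rw [hmdef]
    refine Real.rpow_le_rpow hρ.le ?_ (by norm_num)
    linarith [mul_le_mul_of_nonneg_left hA1 hρ.le]
  have hm4' : m ≤ 4 * ρ^((1:ℝ)/3) := by
    rw [hmdef, show 6*π^2*ρ = (64*ρ)*((6*π^2)/64) by ring]
    calc ((64*ρ)*((6*π^2)/64))^((1:ℝ)/3) ≤ (64*ρ)^((1:ℝ)/3) := by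
          refine Real.rpow_le_rpow (by positivity) ?_ (by norm_num)
          linarith [mul_le_mul_of_nonneg_left hB60 hρ.le]
      _ = 4 * ρ^((1:ℝ)/3) := by
          rw [show (64:ℝ)*ρ = 4^3*ρ by norm_num, Real.mul_rpow (by positivity) hρ.le,
            ← Real.rpow_natCast (4:ℝ) 3, ← Real.rpow_mul (by norm_num)]
          norm_num
  have hm4 : m ≤ 4 := by linarith
  have hcm : 100 * c ≤ m := by linarith
  have hcm3 : c ≤ m^3 := by
    rw [hm3]
    linarith [mul_le_mul_of_nonneg_left hA1 hρ.le]
  -- kF ≤ m + c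
  have hcc := cover_count hL hB
  rw [← hcdef] at hcc
  have hNδ : (B.card:ℝ)*(2*π/L)^3 = 4*π*(6*π^2*ρ)/3 := by
    rw [hcard]
    field_simp
    ring
  have hkFm : kF ≤ m + c := by
    have h2 : (4*π/3) * ((kF - c)^3) ≤ (4*π/3) * (6*π^2*ρ) := by
      rw [hNδ] at hcc
      linarith
    have h3 : (kF - c)^3 ≤ m^3 := by
      rw [hm3]
      exact le_of_mul_le_mul_left h2 (by positivity)
    have := cube_root_mono hm0.le h3
    linarith
  have hkF8 : kF ≤ 8 * ρ^((1:ℝ)/3) := by linarith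
  refine ⟨hkF0, hkF8, ?_⟩
  -- kinetic bound
  have hsum := sum_sq_bound hL hkF0 hB
  rw [← hcdef] at hsum
  obtain ⟨R, hRdef⟩ : ∃ x : ℝ, x = kF + c := ⟨_, rfl⟩
  rw [← hRdef] at hsum
  have hR0 : 0 ≤ R := by rw [hRdef]; linarith
  have hRm2c : R ≤ m + 2*c := by rw [hRdef]; linarith
  have hR2m : R ≤ 2*m := by rw [hRdef]; linarith
  -- monomial chain
  have hcmX : ∀ x : ℝ, 0 ≤ x → 100*(c*x) ≤ m*x := fun x hx => by linarith [mul_le_mul_of_nonneg_right hcm hx]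
  have f1 : 100*(c^2*m^3) ≤ c*m^4 := by linarith [hcmX (c*m^3) (by positivity)]
  have f2 : 100*(c^3*m^2) ≤ c^2*m^3 := by linarith [hcmX (c^2*m^2) (by positivity)]
  have f3 : 100*(c^4*m) ≤ c^3*m^2 := by linarith [hcmX (c^3*m) (by positivity)]
  have f4 : 100*(c^5) ≤ c^4*m := by linarith [hcmX (c^4) (by positivity)]
  have g1 : (0:ℝ) ≤ c*m^4 := by positivity
  have g2 : (0:ℝ) ≤ c^2*m^3 := by positivity
  have g3 : (0:ℝ) ≤ c^3*m^2 := by positivity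
  have g4 : (0:ℝ) ≤ c^4*m := by positivity
  have g5 : (0:ℝ) ≤ c^5 := by positivity
  have g7 : (0:ℝ) ≤ m^7 := by positivity
  have hR5 : R^5 - m^5 ≤ 11*(c*m^4) := by
    have h5 : R^5 ≤ (m+2*c)^5 := pow_le_pow_left₀ hR0 hRm2c 5
    have hbin : (m+2*c)^5 = m^5 + 10*(c*m^4) + 40*(c^2*m^3) + 80*(c^3*m^2) + 80*(c^4*m) + 32*c^5 := by ring
    linarith
  have hR4 : R^4 ≤ 16*m^4 := by
    calc R^4 ≤ (2*m)^4 := pow_le_pow_left₀ hR0 hR2m 4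
      _ = 16*m^4 := by ring
  have hR3 : R^3 ≤ 8*m^3 := by
    calc R^3 ≤ (2*m)^3 := pow_le_pow_left₀ hR0 hR2m 3
      _ = 8*m^3 := by ring
  have t1 : c*R^4 ≤ 16*(c*m^4) := by linarith [mul_le_mul_of_nonneg_left hR4 hc0.le]
  have t2 : c^2*R^3 ≤ 8*(c^2*m^3) := by linarith [mul_le_mul_of_nonneg_left hR3 (by positivity : (0:ℝ) ≤ c^2)]
  have t3 : c*m^4 ≤ m^7 := by linarith [mul_le_mul_of_nonneg_right hcm3 (by positivity : (0:ℝ) ≤ m^4)]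
  have t4 : c^2*m^3 ≤ 16*m^7 := by
    have h1 : c^2 ≤ m^6 := by
      calc c^2 ≤ (m^3)^2 := pow_le_pow_left₀ hc0.le hcm3 2
        _ = m^6 := by ring
    have h2 : c^2*m^3 ≤ m^9 := by linarith [mul_le_mul_of_nonneg_right h1 (by positivity : (0:ℝ) ≤ m^3)]
    have h3 : m^2 ≤ 16 := by
      calc m^2 ≤ 4^2 := pow_le_pow_left₀ hm0.le hm4 2
        _ = 16 := by norm_num
    have h4 : m^9 ≤ 16*m^7 := by linarith [mul_le_mul_of_nonneg_right h3 (by positivity : (0:ℝ) ≤ m^7)]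
    linarith
  have hX : R^5/5 + c*R^4/2 + c^2*R^3/3 ≤ m^5/5 + 14*(c*m^4) + 3*(c^2*m^3) := by linarith only [hR5, t1, t2, g1, g2]
  have hY : m^5/5 + 14*(c*m^4) + 3*(c^2*m^3) ≤ m^5/5 + 62*m^7 := by linarith only [t3, t4, g1, g2]
  have claim : 4*π*(R^5/5 + c*R^4/2 + c^2*R^3/3) ≤ 4*π*(m^5/5) + 1100*m^7 := by
    have h1 : 4*π*(R^5/5 + c*R^4/2 + c^2*R^3/3) ≤ 4*π*(m^5/5 + 62*m^7) :=
      mul_le_mul_of_nonneg_left (hX.trans hY) (by positivity)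
    linarith only [h1, g7, mul_le_mul_of_nonneg_right hπ4.le g7]
  -- convert to density form
  have h8 : (2*π/L)^3 = 8*π^3/L^3 := by
    field_simp
    ring
  have hpos : (0:ℝ) < 8*π^3/L^3 := by positivity
  have hT : (∑ k ∈ B, ‖k‖^2) * (8*π^3/L^3) ≤ 4*π*(m^5/5) + 1100*m^7 := by
    rw [← h8]
    exact hsum.trans claim
  have hm5 : m^5 = (6*π^2)^((5:ℝ)/3) * ρ^((5:ℝ)/3) := by
    rw [hmdef, ← Real.rpow_natCast ((6*π^2*ρ)^((1:ℝ)/3)) 5, ← Real.rpow_mul (by positivity),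
      show (1:ℝ)/3*(5:ℕ) = (5:ℝ)/3 by norm_num, Real.mul_rpow (by positivity) hρ.le]
  have hm7 : m^7 = (6*π^2)^((7:ℝ)/3) * ρ^((7:ℝ)/3) := by
    rw [hmdef, ← Real.rpow_natCast ((6*π^2*ρ)^((1:ℝ)/3)) 7, ← Real.rpow_mul (by positivity),
      show (1:ℝ)/3*(7:ℕ) = (7:ℝ)/3 by norm_num, Real.mul_rpow (by positivity) hρ.le]
  have ha : m^5/(10*π^2) = (3/5)*(6*π^2)^((2:ℝ)/3) * ρ^((5:ℝ)/3) := by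
    rw [hm5, show (5:ℝ)/3 = 2/3 + 1 by norm_num, Real.rpow_add (by positivity), Real.rpow_one]
    field_simp
    ring
  have h673 : (6*π^2)^((7:ℝ)/3) ≤ 14400 := by
    refine cube_root_mono (by norm_num) ?_
    have he : ((6*π^2)^((7:ℝ)/3))^3 = (6*π^2)^7 := by
      rw [← Real.rpow_natCast ((6*π^2)^((7:ℝ)/3)) 3, ← Real.rpow_mul (by positivity),
        show (7:ℝ)/3*(3:ℕ) = (7:ℕ) by norm_num, Real.rpow_natCast]
    rw [he]
    calc (6*π^2)^7 ≤ 60^7 := pow_le_pow_left₀ (by positivity) hB60 7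
      _ ≤ (14400:ℝ)^3 := by norm_num
  have hb : 1100*m^7/(8*π^3) ≤ 100000 * ρ^((7:ℝ)/3) := by
    rw [hm7]
    have hρ73 : (0:ℝ) ≤ ρ^((7:ℝ)/3) := by positivity
    rw [div_le_iff₀ (by positivity : (0:ℝ) < 8*π^3)]
    linarith [mul_le_mul_of_nonneg_right h673 hρ73, mul_le_mul_of_nonneg_right hπ27 hρ73]
  calc (∑ k ∈ B, ‖k‖^2) ≤ (4*π*(m^5/5) + 1100*m^7)/(8*π^3/L^3) := (le_div_iff₀ hpos).mpr hT
    _ = L^3 * (m^5/(10*π^2) + 1100*m^7/(8*π^3)) := by field_simp; ring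
    _ ≤ L^3 * ((3/5)*(6*π^2)^((2:ℝ)/3) * ρ^((5:ℝ)/3) + 100000 * ρ^((7:ℝ)/3)) := by
        refine mul_le_mul_of_nonneg_left ?_ (by positivity)
        rw [ha] at *
        linarith

end HFaux

set_option maxHeartbeats 1000000 in
/-- Hartree–Fock upper bound from the free Fermi gas trial state: if the ground
state energy `E` is bounded by the energy of the free Fermi gas (kinetic +
direct + exchange, with Fermi balls `B_↑, B_↓` of lattice momenta containing
`ρ_σ L³` points), and `V̂ ≥ 0` is Lipschitz at `0`, then
`E/L³ ≤ (3/5)(6π²)^{2/3}(ρ_↑^{5/3}+ρ_↓^{5/3}) + V̂(0) ρ_↑ ρ_↓ + C ρ^{7/3}`,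
the exchange term cancelling the same-spin direct term up to `O(ρ^{7/3})`. -/
theorem stmt_15 (Vhat : EuclideanSpace ℝ (Fin 3) → ℝ) (CLip : ℝ)
    (hVhat0 : ∀ p, 0 ≤ Vhat p)
    (hLip : ∀ p : EuclideanSpace ℝ (Fin 3), |Vhat p - Vhat 0| ≤ CLip * ‖p‖) :
    ∃ C ρ₀ : ℝ, 0 < C ∧ 0 < ρ₀ ∧
      ∀ ρu ρd : ℝ, 0 < ρu → 0 < ρd → ρu + ρd ≤ ρ₀ →
        ∃ L₀ : ℝ, ∀ L : ℝ, L₀ ≤ L →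
          ∀ (Bu Bd : Finset (EuclideanSpace ℝ (Fin 3))) (kFu kFd E : ℝ),
            (∀ k : EuclideanSpace ℝ (Fin 3), k ∈ Bu ↔
              ((∀ i : Fin 3, ∃ n : ℤ, k i = 2 * Real.pi * n / L) ∧ ‖k‖ ≤ kFu)) →
            (∀ k : EuclideanSpace ℝ (Fin 3), k ∈ Bd ↔
              ((∀ i : Fin 3, ∃ n : ℤ, k i = 2 * Real.pi * n / L) ∧ ‖k‖ ≤ kFd)) →
            (Bu.card : ℝ) = ρu * L ^ 3 →
            (Bd.card : ℝ) = ρd * L ^ 3 →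
            -- variational principle with the free Fermi gas trial state:
            E ≤ ((∑ k ∈ Bu, ‖k‖ ^ 2) + ∑ k ∈ Bd, ‖k‖ ^ 2)
                + (L ^ 3 / 2) * Vhat 0 * (ρu + ρd) ^ 2
                - (1 / (2 * L ^ 3)) *
                    ((∑ k ∈ Bu, ∑ k' ∈ Bu, Vhat (k - k'))
                      + ∑ k ∈ Bd, ∑ k' ∈ Bd, Vhat (k - k')) →
            E / L ^ 3 ≤
              (3/5) * (6 * Real.pi ^ 2) ^ ((2:ℝ)/3) * (ρu ^ ((5:ℝ)/3) + ρd ^ ((5:ℝ)/3))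
                + Vhat 0 * ρu * ρd + C * (ρu + ρd) ^ ((7:ℝ)/3) := by
  have hCLip0 : 0 ≤ CLip := by
    have h := hLip (EuclideanSpace.single 0 (1:ℝ))
    have hn : ‖EuclideanSpace.single (0 : Fin 3) (1:ℝ)‖ = 1 := by
      rw [EuclideanSpace.norm_single]
      norm_num
    rw [hn, mul_one] at h
    exact le_trans (abs_nonneg _) h
  refine ⟨200001 + 16*CLip, 1, by linarith, one_pos, ?_⟩
  intro ρu ρd hρu hρd hρsum
  refine ⟨1000/ρu + 1000/ρd, ?_⟩
  intro L hLge Bu Bd kFu kFd E hBu hBd hcu hcd hE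
  have hL : 0 < L := lt_of_lt_of_le (by positivity) hLge
  have hπ3 : (3:ℝ) < π := pi_gt_three
  have hπ4 : π < 3.15 := pi_lt_d2
  have hs3 : Real.sqrt 3 ≤ 2 := by
    nlinarith [Real.sq_sqrt (by norm_num : (0:ℝ) ≤ 3), Real.sqrt_nonneg 3]
  have hsmall : ∀ ρσ : ℝ, 0 < ρσ → 1000/ρσ ≤ L → Real.sqrt 3 * π / L ≤ ρσ/100 := by
    intro ρσ h1 h2
    have h3 : 1000 ≤ ρσ * L := by
      rw [div_le_iff₀ h1] at h2
      linarith
    rw [div_le_div_iff₀ hL (by norm_num : (0:ℝ) < 100)]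
    nlinarith [Real.sqrt_nonneg 3, mul_le_mul hs3 hπ4.le (by linarith) (by norm_num : (0:ℝ) ≤ 2)]
  have hdu : (0:ℝ) < 1000/ρd := by positivity
  have huu : (0:ℝ) < 1000/ρu := by positivity
  have hsu := hsmall ρu hρu (by linarith)
  have hsd := hsmall ρd hρd (by linarith)
  have hρu1 : ρu ≤ 1 := by linarith
  have hρd1 : ρd ≤ 1 := by linarith
  obtain ⟨hkFu0, hkFu8, hTu⟩ := spin_bound hL hρu hρu1 hBu hcu hsu
  obtain ⟨hkFd0, hkFd8, hTd⟩ := spin_bound hL hρd hρd1 hBd hcd hsd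
  -- exchange term lower bound
  have exch : ∀ (B : Finset (EuclideanSpace ℝ (Fin 3))) (kF : ℝ),
      (∀ k : EuclideanSpace ℝ (Fin 3), k ∈ B ↔
        ((∀ i : Fin 3, ∃ n : ℤ, k i = 2 * Real.pi * n / L) ∧ ‖k‖ ≤ kF)) →
      (B.card:ℝ)*((B.card:ℝ)*(Vhat 0 - 2*CLip*kF)) ≤ ∑ k ∈ B, ∑ k' ∈ B, Vhat (k - k') := by
    intro B kF hB
    have hterm : ∀ k ∈ B, ∀ k' ∈ B, Vhat 0 - 2*CLip*kF ≤ Vhat (k - k') := by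
      intro k hk k' hk'
      have h1 := hLip (k - k')
      have h2 : ‖k - k'‖ ≤ 2*kF :=
        le_trans (norm_sub_le k k') (by linarith [((hB k).mp hk).2, ((hB k').mp hk').2])
      have h3 : CLip*‖k-k'‖ ≤ CLip*(2*kF) := mul_le_mul_of_nonneg_left h2 hCLip0
      have h4 := neg_abs_le (Vhat (k - k') - Vhat 0)
      linarith
    calc (B.card:ℝ)*((B.card:ℝ)*(Vhat 0 - 2*CLip*kF))
        = ∑ _k ∈ B, (B.card:ℝ)*(Vhat 0 - 2*CLip*kF) := by
          rw [Finset.sum_const, nsmul_eq_mul]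
      _ ≤ ∑ k ∈ B, ∑ k' ∈ B, Vhat (k - k') := Finset.sum_le_sum (fun k hk => by
          have h := Finset.card_nsmul_le_sum B (fun k' => Vhat (k - k')) _
            (fun k' hk' => hterm k hk k' hk')
          simpa [nsmul_eq_mul] using h)
  have hXu := exch Bu kFu hBu
  have hXd := exch Bd kFd hBd
  have hL3 : (0:ℝ) < L^3 := by positivity
  rw [div_le_iff₀ hL3]
  refine le_trans hE ?_
  have e1 : ∀ x : ℝ, (1/(2*L^3)) * ((ρu*L^3)*((ρu*L^3)*x)) = L^3*(ρu^2*x)/2 := by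
    intro x
    field_simp
  have e2 : ∀ x : ℝ, (1/(2*L^3)) * ((ρd*L^3)*((ρd*L^3)*x)) = L^3*(ρd^2*x)/2 := by
    intro x
    field_simp
  have hXu' : L^3*(ρu^2*(Vhat 0 - 2*CLip*kFu))/2
      ≤ (1/(2*L^3)) * (∑ k ∈ Bu, ∑ k' ∈ Bu, Vhat (k - k')) := by
    rw [← e1]
    refine mul_le_mul_of_nonneg_left ?_ (by positivity)
    rw [← hcu]
    exact hXu
  have hXd' : L^3*(ρd^2*(Vhat 0 - 2*CLip*kFd))/2
      ≤ (1/(2*L^3)) * (∑ k ∈ Bd, ∑ k' ∈ Bd, Vhat (k - k')) := by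
    rw [← e2]
    refine mul_le_mul_of_nonneg_left ?_ (by positivity)
    rw [← hcd]
    exact hXd
  have hq : ∀ ρσ kFσ : ℝ, 0 < ρσ → kFσ ≤ 8*ρσ^((1:ℝ)/3) → ρσ^2*kFσ ≤ 8*ρσ^((7:ℝ)/3) := by
    intro ρσ kFσ h0 h2
    have hid : ρσ^2*ρσ^((1:ℝ)/3) = ρσ^((7:ℝ)/3) := by
      rw [← Real.rpow_natCast ρσ 2, ← Real.rpow_add h0]
      norm_num
    calc ρσ^2*kFσ ≤ ρσ^2*(8*ρσ^((1:ℝ)/3)) := mul_le_mul_of_nonneg_left h2 (by positivity)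
      _ = 8*ρσ^((7:ℝ)/3) := by rw [← hid]; ring
  have hqu := hq ρu kFu hρu hkFu8
  have hqd := hq ρd kFd hρd hkFd8
  have hmu : ρu^((7:ℝ)/3) ≤ (ρu+ρd)^((7:ℝ)/3) :=
    Real.rpow_le_rpow hρu.le (by linarith) (by norm_num)
  have hmd : ρd^((7:ℝ)/3) ≤ (ρu+ρd)^((7:ℝ)/3) :=
    Real.rpow_le_rpow hρd.le (by linarith) (by norm_num)
  have hCL3 : (0:ℝ) ≤ L^3*CLip := mul_nonneg hL3.le hCLip0
  have n1 : L^3*CLip*(ρu^2*kFu) ≤ L^3*CLip*(8*ρu^((7:ℝ)/3)) :=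
    mul_le_mul_of_nonneg_left hqu hCL3
  have n2 : L^3*CLip*(ρd^2*kFd) ≤ L^3*CLip*(8*ρd^((7:ℝ)/3)) :=
    mul_le_mul_of_nonneg_left hqd hCL3
  have n3 : L^3*CLip*(8*ρu^((7:ℝ)/3)) ≤ L^3*CLip*(8*(ρu+ρd)^((7:ℝ)/3)) :=
    mul_le_mul_of_nonneg_left (by linarith) hCL3
  have n4 : L^3*CLip*(8*ρd^((7:ℝ)/3)) ≤ L^3*CLip*(8*(ρu+ρd)^((7:ℝ)/3)) :=
    mul_le_mul_of_nonneg_left (by linarith) hCL3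
  have n5 : L^3*(100000*ρu^((7:ℝ)/3)) ≤ L^3*(100000*(ρu+ρd)^((7:ℝ)/3)) :=
    mul_le_mul_of_nonneg_left (by linarith) hL3.le
  have n6 : L^3*(100000*ρd^((7:ℝ)/3)) ≤ L^3*(100000*(ρu+ρd)^((7:ℝ)/3)) :=
    mul_le_mul_of_nonneg_left (by linarith) hL3.le
  have n7 : (0:ℝ) ≤ L^3*(ρu+ρd)^((7:ℝ)/3) := by positivity
  have hTu' : (∑ k ∈ Bu, ‖k‖^2)
      ≤ L^3*((3/5)*(6*π^2)^((2:ℝ)/3) * ρu^((5:ℝ)/3)) + L^3*(100000*ρu^((7:ℝ)/3)) := by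
    linarith only [hTu]
  have hTd' : (∑ k ∈ Bd, ‖k‖^2)
      ≤ L^3*((3/5)*(6*π^2)^((2:ℝ)/3) * ρd^((5:ℝ)/3)) + L^3*(100000*ρd^((7:ℝ)/3)) := by
    linarith only [hTd]
  linarith only [hTu', hTd', hXu', hXd', n1, n2, n3, n4, n5, n6, n7]
end
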